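/- Let Σ ∈ ℝ^{p×p} be symmetric positive definite with all eigenvalues in [1/K̄, K̄] for some K̄ ≥ 1. Let A₁ be a set of pairs (i,j) with 1 ≤ i < j ≤ p, let A₂ be the set of indices in {1, …, p} that appear in no pair of A₁, and suppose K₀ ≥ 1 is an integer such that every index appears in at most K₀ pairs of A₁. Define P_O = Σ_{(i,j)∈A₁} P_{ij}ᵀ (P_{ij} Σ P_{ij}ᵀ)⁻¹ P_{ij} + Σ_{i∈A₂} P_iᵀ (P_i Σ P_iᵀ)⁻¹ P_i and Λ₁ = Σ^{1/2} P_O Σ^{1/2}. Then every eigenvalue of Λ₁ lies in [K̄⁻², K₀ K̄²]; consequently p K̄⁻⁴ ≤ tr(Λ₁²) ≤ p K₀² K̄⁴ and tr(Λ₁⁴)/tr²(Λ₁²) ≤ K₀⁴ K̄¹⁶ / p. -/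

import Mathlib

open MeasureTheory ProbabilityTheory Filter Matrix
open scoped BigOperators Classical

noncomputable section

namespace PHT

/-- Population Kendall tau correlation of coordinates `i, j` for a law `ν` on `Fin p → ℝ`,
computed from two independent copies. -/
def kendallPop {p : ℕ} (ν : Measure (Fin p → ℝ)) (i j : Fin p) : ℝ :=
  ∫ w : (Fin p → ℝ) × (Fin p → ℝ),
    Real.sign ((w.1 i - w.2 i) * (w.1 j - w.2 j)) ∂(ν.prod ν)

/-- Sample Kendall tau correlation computed from the data `x`. -/
def kendallSample {n p : ℕ} (x : Fin n → Fin p → ℝ) (i j : Fin p) : ℝ :=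
  (2 / ((n : ℝ) * ((n : ℝ) - 1))) *
    ∑ s : Fin n, ∑ t : Fin n,
      if s < t then Real.sign ((x s i - x t i) * (x s j - x t j)) else 0

/-- Index set of strongly correlated pairs at threshold `τ0`. -/
def setA1 {p : ℕ} (τ : Fin p → Fin p → ℝ) (τ0 : ℝ) : Finset (Fin p × Fin p) :=
  Finset.univ.filter fun ij => ij.1 < ij.2 ∧ τ0 < τ ij.1 ij.2

/-- Index set of coordinates with little correlation with the others, at threshold `τ0`. -/
def setA2 {p : ℕ} (τ : Fin p → Fin p → ℝ) (τ0 : ℝ) : Finset (Fin p) :=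
  Finset.univ.filter fun i => ∀ j, j ≠ i → τ i j < τ0

/-- The 2×p selection matrix with rows `eᵢ`, `eⱼ`. -/
def P2 {p : ℕ} (i j : Fin p) : Matrix (Fin 2) (Fin p) ℝ :=
  fun r c => if r = 0 then (if c = i then (1 : ℝ) else 0) else (if c = j then 1 else 0)

/-- The 1×p selection matrix `eᵢ`. -/
def P1 {p : ℕ} (i : Fin p) : Matrix (Fin 1) (Fin p) ℝ :=
  fun _ c => if c = i then (1 : ℝ) else 0

/-- The pairwise-Hotelling weighting matrix built from a p×p matrix `G` and index sets. -/
def PO {p : ℕ} (G : Matrix (Fin p) (Fin p) ℝ)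
    (A1 : Finset (Fin p × Fin p)) (A2 : Finset (Fin p)) : Matrix (Fin p) (Fin p) ℝ :=
  (∑ ij ∈ A1, (P2 ij.1 ij.2)ᵀ * (P2 ij.1 ij.2 * G * (P2 ij.1 ij.2)ᵀ)⁻¹ * P2 ij.1 ij.2) +
    ∑ i ∈ A2, (P1 i)ᵀ * (P1 i * G * (P1 i)ᵀ)⁻¹ * P1 i

/-- Sample mean of the observations indexed by `K`. -/
def sampleMeanOn {n p : ℕ} (x : Fin n → Fin p → ℝ) (K : Finset (Fin n)) : Fin p → ℝ :=
  fun i => (∑ k ∈ K, x k i) / (K.card : ℝ)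

/-- Sample covariance matrix of the observations indexed by `K`. -/
def sampleCovOn {n p : ℕ} (x : Fin n → Fin p → ℝ) (K : Finset (Fin n)) :
    Matrix (Fin p) (Fin p) ℝ :=
  fun i j =>
    (∑ k ∈ K, (x k i - sampleMeanOn x K i) * (x k j - sampleMeanOn x K j)) / ((K.card : ℝ) - 1)

/-- Sample covariance matrix of the full data. -/
def sampleCov {n p : ℕ} (x : Fin n → Fin p → ℝ) : Matrix (Fin p) (Fin p) ℝ :=
  sampleCovOn x Finset.univ

/-- Bilinear form `vᵀ M w`. -/
def quadForm {p : ℕ} (M : Matrix (Fin p) (Fin p) ℝ) (v w : Fin p → ℝ) : ℝ :=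
  v ⬝ᵥ M.mulVec w

/-- Frobenius norm of a matrix. -/
def frob {m n : ℕ} (A : Matrix (Fin m) (Fin n) ℝ) : ℝ :=
  Real.sqrt (∑ i, ∑ j, (A i j) ^ 2)

/-- The one-sample pairwise Hotelling statistic `T₁(τ₀)`. -/
def T1stat {n p : ℕ} (x : Fin n → Fin p → ℝ) (mu0 : Fin p → ℝ) (τ0 : ℝ) : ℝ :=
  (1 / ((n : ℝ) * ((n : ℝ) - 1))) *
    ∑ s : Fin n, ∑ t : Fin n,
      if t ≠ s then
        quadForm
          (PO (sampleCovOn x (Finset.univ \ {s, t}))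
            (setA1 (fun i j => |kendallSample x i j|) τ0)
            (setA2 (fun i j => |kendallSample x i j|) τ0))
          (fun i => x s i - mu0 i) (fun i => x t i - mu0 i)
      else 0

/-- The one-sample estimator of `tr(Λ₁²)`. -/
def trHat1 {n p : ℕ} (x : Fin n → Fin p → ℝ) (τ0 : ℝ) : ℝ :=
  (1 / ((n : ℝ) * ((n : ℝ) - 1))) *
    ∑ s : Fin n, ∑ t : Fin n,
      if t ≠ s then
        quadForm
          (PO (sampleCovOn x (Finset.univ \ {s, t}))
            (setA1 (fun i j => |kendallSample x i j|) τ0)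
            (setA2 (fun i j => |kendallSample x i j|) τ0))
          (fun i => x s i - sampleMeanOn x (Finset.univ \ {s, t}) i) (x t) *
        quadForm
          (PO (sampleCovOn x (Finset.univ \ {s, t}))
            (setA1 (fun i j => |kendallSample x i j|) τ0)
            (setA2 (fun i j => |kendallSample x i j|) τ0))
          (fun i => x t i - sampleMeanOn x (Finset.univ \ {s, t}) i) (x s)
      else 0

/-- Pooled two-sample Kendall tau estimates. -/
def pooledTauHat {n1 n2 p : ℕ} (x : Fin n1 → Fin p → ℝ) (y : Fin n2 → Fin p → ℝ)
    (i j : Fin p) : ℝ :=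
  ((n1 : ℝ) * |kendallSample x i j| + (n2 : ℝ) * |kendallSample y i j|) / ((n1 : ℝ) + (n2 : ℝ))

/-- Pooled sample covariance without observations `s`, `t` of group 1. -/
def S1star {n1 n2 p : ℕ} (x : Fin n1 → Fin p → ℝ) (y : Fin n2 → Fin p → ℝ) (s t : Fin n1) :
    Matrix (Fin p) (Fin p) ℝ :=
  ((n1 : ℝ) + (n2 : ℝ) - 2)⁻¹ •
    (((n1 : ℝ) - 2) • sampleCovOn x (Finset.univ \ {s, t}) + (n2 : ℝ) • sampleCov y)

/-- Pooled sample covariance without observations `s`, `t` of group 2. -/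
def S2star {n1 n2 p : ℕ} (x : Fin n1 → Fin p → ℝ) (y : Fin n2 → Fin p → ℝ) (s t : Fin n2) :
    Matrix (Fin p) (Fin p) ℝ :=
  ((n1 : ℝ) + (n2 : ℝ) - 2)⁻¹ •
    ((n1 : ℝ) • sampleCov x + ((n2 : ℝ) - 2) • sampleCovOn y (Finset.univ \ {s, t}))

/-- Pooled sample covariance without observation `s` of group 1 and `t` of group 2. -/
def S12star {n1 n2 p : ℕ} (x : Fin n1 → Fin p → ℝ) (y : Fin n2 → Fin p → ℝ)
    (s : Fin n1) (t : Fin n2) : Matrix (Fin p) (Fin p) ℝ :=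
  ((n1 : ℝ) + (n2 : ℝ) - 2)⁻¹ •
    (((n1 : ℝ) - 1) • sampleCovOn x (Finset.univ \ {s}) +
      ((n2 : ℝ) - 1) • sampleCovOn y (Finset.univ \ {t}))

/-- The two-sample pairwise Hotelling statistic `T₂(τ₀)`. -/
def T2stat {n1 n2 p : ℕ} (x : Fin n1 → Fin p → ℝ) (y : Fin n2 → Fin p → ℝ) (τ0 : ℝ) : ℝ :=
  (1 / ((n1 : ℝ) * ((n1 : ℝ) - 1))) *
      (∑ s : Fin n1, ∑ t : Fin n1,
        if t ≠ s then
          quadForm (PO (S1star x y s t) (setA1 (pooledTauHat x y) τ0)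
            (setA2 (pooledTauHat x y) τ0)) (x s) (x t)
        else 0) +
    (1 / ((n2 : ℝ) * ((n2 : ℝ) - 1))) *
      (∑ s : Fin n2, ∑ t : Fin n2,
        if t ≠ s then
          quadForm (PO (S2star x y s t) (setA1 (pooledTauHat x y) τ0)
            (setA2 (pooledTauHat x y) τ0)) (y s) (y t)
        else 0) -
    (2 / ((n1 : ℝ) * (n2 : ℝ))) *
      ∑ s : Fin n1, ∑ t : Fin n2,
        quadForm (PO (S12star x y s t) (setA1 (pooledTauHat x y) τ0)
          (setA2 (pooledTauHat x y) τ0)) (x s) (y t)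

/-- The two-sample estimator of `tr(Λ₁²)`. -/
def trHat2 {n1 n2 p : ℕ} (x : Fin n1 → Fin p → ℝ) (y : Fin n2 → Fin p → ℝ) (τ0 : ℝ) : ℝ :=
  (1 / (2 * (n1 : ℝ) * ((n1 : ℝ) - 1))) *
      (∑ s : Fin n1, ∑ t : Fin n1,
        if t ≠ s then
          quadForm (PO (S1star x y s t) (setA1 (pooledTauHat x y) τ0)
              (setA2 (pooledTauHat x y) τ0))
            (fun i => x s i - sampleMeanOn x (Finset.univ \ {s, t}) i) (x t) *
          quadForm (PO (S1star x y s t) (setA1 (pooledTauHat x y) τ0)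
              (setA2 (pooledTauHat x y) τ0))
            (fun i => x t i - sampleMeanOn x (Finset.univ \ {s, t}) i) (x s)
        else 0) +
    (1 / (2 * (n2 : ℝ) * ((n2 : ℝ) - 1))) *
      ∑ s : Fin n2, ∑ t : Fin n2,
        if t ≠ s then
          quadForm (PO (S2star x y s t) (setA1 (pooledTauHat x y) τ0)
              (setA2 (pooledTauHat x y) τ0))
            (fun i => y s i - sampleMeanOn y (Finset.univ \ {s, t}) i) (y t) *
          quadForm (PO (S2star x y s t) (setA1 (pooledTauHat x y) τ0)
              (setA2 (pooledTauHat x y) τ0))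
            (fun i => y t i - sampleMeanOn y (Finset.univ \ {s, t}) i) (y s)
        else 0

/-- The ρ-mixing condition for the coordinate sequence of `X`, with bound `bound s` on the
mixing coefficient at distance `s`; the supremum defining ρ(s) runs over index sets of
cardinality at most two. -/
def rhoMixBound {Ω : Type*} [MeasurableSpace Ω] (μ : Measure Ω) {p : ℕ}
    (X : Ω → Fin p → ℝ) (bound : ℕ → ℝ) : Prop :=
  ∀ (s : ℕ) (A B : Finset (Fin p)), A.card ≤ 2 → B.card ≤ 2 →
    (∀ i ∈ A, ∀ j ∈ B, s ≤ ((i : ℤ) - (j : ℤ)).natAbs) →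
    ∀ g1 g2 : Ω → ℝ,
      Measurable[MeasurableSpace.comap (fun ω (i : A) => X ω i.1) inferInstance] g1 →
      Measurable[MeasurableSpace.comap (fun ω (j : B) => X ω j.1) inferInstance] g2 →
      MemLp g1 2 μ → MemLp g2 2 μ →
      |∫ ω, (g1 ω - ∫ a, g1 a ∂μ) * (g2 ω - ∫ a, g2 a ∂μ) ∂μ| ≤
        bound s * Real.sqrt (∫ ω, (g1 ω - ∫ a, g1 a ∂μ) ^ 2 ∂μ) *
          Real.sqrt (∫ ω, (g2 ω - ∫ a, g2 a ∂μ) ^ 2 ∂μ)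

/-- The positive semidefinite square root of a positive semidefinite matrix
(the former `Matrix.PosSemidef.sqrt`, with its old definition). -/
def psdSqrt {p : ℕ} {S : Matrix (Fin p) (Fin p) ℝ} (hA : S.PosSemidef) :
    Matrix (Fin p) (Fin p) ℝ :=
  (hA.1.eigenvectorUnitary : Matrix (Fin p) (Fin p) ℝ) *
    diagonal ((↑) ∘ (√·) ∘ hA.1.eigenvalues) *
    (star (hA.1.eigenvectorUnitary : Matrix (Fin p) (Fin p) ℝ))

end PHT

/-!
In the Loewner order, `Kb⁻¹ ≤ Σ ≤ Kb`. Compressing `Σ` to the coordinates of a pair (or of a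
single index) keeps these bounds, and inverting swaps them, so each summand of `P_O` lies between
`Kb⁻¹` and `Kb` times the corresponding coordinate projection. The projections sum to the diagonal
matrix counting how often each index is covered, which lies between `1` and `K₀`; hence
`Kb⁻¹ ≤ P_O ≤ K₀ Kb`. Conjugating by `Σ^{1/2}` multiplies these bounds by those of `Σ`, which
gives the eigenvalue bounds for `Λ₁`; the trace bounds follow from `tr(Λ₁ᵏ) = ∑ λᵢᵏ`.
-/

open scoped MatrixOrder

namespace Matrix

variable {m n : Type*}

section Fintype

variable [Fintype m] [Fintype n]

lemma dotProduct_mulVec_mono {A B : Matrix n n ℝ} (h : A ≤ B) (v : n → ℝ) :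
    v ⬝ᵥ A *ᵥ v ≤ v ⬝ᵥ B *ᵥ v := by
  have := h.dotProduct_mulVec_nonneg v
  simp only [star_trivial, sub_mulVec, dotProduct_sub] at this
  linarith

lemma mul_mul_transpose_mono {A B : Matrix n n ℝ} (h : A ≤ B) (P : Matrix m n ℝ) :
    P * A * Pᵀ ≤ P * B * Pᵀ := by
  have := h.mul_mul_conjTranspose_same P
  rwa [conjTranspose_eq_transpose_of_trivial, Matrix.mul_sub, Matrix.sub_mul] at this

end Fintype

variable [DecidableEq m] [DecidableEq n]

lemma isHermitian_of_smul_one_le {A : Matrix n n ℝ} {a : ℝ} (h : a • (1 : Matrix n n ℝ) ≤ A) :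
    A.IsHermitian := by
  simpa using h.isHermitian.add (isHermitian_one.smul (.all a))

lemma posDef_of_smul_one_le {A : Matrix n n ℝ} {a : ℝ} (ha : 0 < a)
    (h : a • (1 : Matrix n n ℝ) ≤ A) : A.PosDef := by
  simpa using (PosDef.one.smul ha).posSemidef_add h

lemma diagonal_mono {d e : n → ℝ} (h : ∀ i, d i ≤ e i) : diagonal d ≤ diagonal e := by
  rw [le_iff, diagonal_sub, posSemidef_diagonal_iff]
  exact fun i => sub_nonneg.2 (h i)

variable [Fintype m] [Fintype n]

lemma IsHermitian.smul_one_le_iff {A : Matrix n n ℝ} (hA : A.IsHermitian) (a : ℝ) :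
    a • (1 : Matrix n n ℝ) ≤ A ↔ ∀ i, a ≤ hA.eigenvalues i := by
  rw [← Algebra.algebraMap_eq_smul_one, algebraMap_le_iff_le_spectrum (ha := hA.isSelfAdjoint)]
  simp [hA.spectrum_real_eq_range_eigenvalues]

lemma IsHermitian.le_smul_one_iff {A : Matrix n n ℝ} (hA : A.IsHermitian) (a : ℝ) :
    A ≤ a • (1 : Matrix n n ℝ) ↔ ∀ i, hA.eigenvalues i ≤ a := by
  rw [← Algebra.algebraMap_eq_smul_one, le_algebraMap_iff_spectrum_le (ha := hA.isSelfAdjoint)]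
  simp [hA.spectrum_real_eq_range_eigenvalues]

lemma IsHermitian.trace_pow {A : Matrix n n ℝ} (hA : A.IsHermitian) (k : ℕ) :
    (A ^ k).trace = ∑ i, hA.eigenvalues i ^ k := by
  conv_lhs => rw [hA.spectral_theorem, ← map_pow, Unitary.conjStarAlgAut_apply, trace_mul_cycle,
    Unitary.coe_star_mul_self, one_mul, diagonal_pow, trace_diagonal]
  rfl

lemma PosDef.inv_bounds {M : Matrix n n ℝ} (hM : M.PosDef) {a b : ℝ} (ha : 0 < a)
    (hab : a • 1 ≤ M ∧ M ≤ b • 1) : b⁻¹ • 1 ≤ M⁻¹ ∧ M⁻¹ ≤ a⁻¹ • 1 := by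
  obtain ⟨u, rfl⟩ := hM.isUnit
  have hspec : ∀ x ∈ spectrum ℝ (u : Matrix n n ℝ), a ≤ x ∧ x ≤ b := by
    rw [← Algebra.algebraMap_eq_smul_one, ← Algebra.algebraMap_eq_smul_one,
      algebraMap_le_iff_le_spectrum (ha := hM.isHermitian.isSelfAdjoint),
      le_algebraMap_iff_spectrum_le (ha := hM.isHermitian.isSelfAdjoint)] at hab
    exact fun x hx => ⟨hab.1 x hx, hab.2 x hx⟩
  have hsa : IsSelfAdjoint (u : Matrix n n ℝ)⁻¹ := hM.inv.isHermitian.isSelfAdjoint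
  rw [← Algebra.algebraMap_eq_smul_one, ← Algebra.algebraMap_eq_smul_one,
    algebraMap_le_iff_le_spectrum (ha := hsa), le_algebraMap_iff_spectrum_le (ha := hsa),
    ← coe_units_inv, ← spectrum.map_inv]
  refine ⟨fun x hx => ?_, fun x hx => ?_⟩
  all_goals
    obtain ⟨hax, hxb⟩ := hspec _ (Set.mem_inv.mp hx)
    have hx₀ : 0 < x⁻¹ := ha.trans_le hax
  · simpa using inv_anti₀ hx₀ hxb
  · simpa using inv_anti₀ ha hax

lemma smul_one_le_mul_mul_transpose {M : Matrix n n ℝ} {Q : Matrix m n ℝ} {α a : ℝ}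
    (hα : 0 ≤ α) (hM : α • 1 ≤ M) (hQ : a • 1 ≤ Q * Qᵀ) : (α * a) • 1 ≤ Q * M * Qᵀ :=
  calc (α * a) • (1 : Matrix m m ℝ) = α • (a • (1 : Matrix m m ℝ)) := by rw [smul_smul]
    _ ≤ α • (Q * Qᵀ) := smul_le_smul_of_nonneg_left hQ hα
    _ = Q * (α • (1 : Matrix n n ℝ)) * Qᵀ := by simp
    _ ≤ Q * M * Qᵀ := mul_mul_transpose_mono hM Q

lemma mul_mul_transpose_le_smul_one {M : Matrix n n ℝ} {Q : Matrix m n ℝ} {β b : ℝ}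
    (hβ : 0 ≤ β) (hM : M ≤ β • 1) (hQ : Q * Qᵀ ≤ b • 1) : Q * M * Qᵀ ≤ (β * b) • 1 :=
  calc Q * M * Qᵀ ≤ Q * (β • (1 : Matrix n n ℝ)) * Qᵀ := mul_mul_transpose_mono hM Q
    _ = β • (Q * Qᵀ) := by simp
    _ ≤ β • (b • (1 : Matrix m m ℝ)) := smul_le_smul_of_nonneg_left hQ hβ
    _ = (β * b) • (1 : Matrix m m ℝ) := by rw [smul_smul]

lemma transpose_mul_inv_mul_bounds {S : Matrix n n ℝ} {a b : ℝ} (ha : 0 < a)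
    (hS : a • 1 ≤ S ∧ S ≤ b • 1) {P : Matrix m n ℝ} (hP : P * Pᵀ = 1) :
    b⁻¹ • (Pᵀ * P) ≤ Pᵀ * (P * S * Pᵀ)⁻¹ * P ∧ Pᵀ * (P * S * Pᵀ)⁻¹ * P ≤ a⁻¹ • (Pᵀ * P) := by
  have hc : a • 1 ≤ P * S * Pᵀ ∧ P * S * Pᵀ ≤ b • 1 := by
    simpa [hP] using And.intro (mul_mul_transpose_mono hS.1 P) (mul_mul_transpose_mono hS.2 P)
  have hinv := (posDef_of_smul_one_le ha hc.1).inv_bounds ha hc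
  simpa using And.intro (mul_mul_transpose_mono hinv.1 Pᵀ) (mul_mul_transpose_mono hinv.2 Pᵀ)

lemma IsHermitian.trace_pow_bounds {A : Matrix n n ℝ} (hA : A.IsHermitian) {a b : ℝ}
    (ha : 0 ≤ a) (hab : ∀ i, a ≤ hA.eigenvalues i ∧ hA.eigenvalues i ≤ b) (k : ℕ) :
    Fintype.card n * a ^ k ≤ (A ^ k).trace ∧ (A ^ k).trace ≤ Fintype.card n * b ^ k := by
  rw [hA.trace_pow, ← nsmul_eq_mul, ← nsmul_eq_mul, ← Finset.card_univ, ← Finset.sum_const,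
    ← Finset.sum_const]
  exact ⟨Finset.sum_le_sum fun i _ => pow_le_pow_left₀ ha (hab i).1 k,
    Finset.sum_le_sum fun i _ => pow_le_pow_left₀ (ha.trans (hab i).1) (hab i).2 k⟩

lemma IsHermitian.trace_pow_four_div_sq_le {A : Matrix n n ℝ} (hA : A.IsHermitian) {a b : ℝ}
    (ha : 0 < a) (hab : ∀ i, a ≤ hA.eigenvalues i ∧ hA.eigenvalues i ≤ b)
    (hn : 0 < Fintype.card n) :
    (A ^ 4).trace / (A ^ 2).trace ^ 2 ≤ b ^ 4 / (Fintype.card n * a ^ 4) := by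
  have h2 := (hA.trace_pow_bounds ha.le hab 2).1
  have h4 := (hA.trace_pow_bounds ha.le hab 4).2
  calc (A ^ 4).trace / (A ^ 2).trace ^ 2
      ≤ Fintype.card n * b ^ 4 / (Fintype.card n * a ^ 2) ^ 2 :=
        div_le_div₀ (by positivity) h4 (by positivity) (pow_le_pow_left₀ (by positivity) h2 2)
    _ = b ^ 4 / (Fintype.card n * a ^ 4) := by
        field_simp

end Matrix

namespace PHT

variable {p : ℕ}

lemma P2_mul_transpose {i j : Fin p} (hij : i ≠ j) : P2 i j * (P2 i j)ᵀ = 1 := by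
  ext r c
  fin_cases r <;> fin_cases c <;>
    simp [P2, Matrix.mul_apply, hij, hij.symm]

lemma P1_mul_transpose (i : Fin p) : P1 i * (P1 i)ᵀ = 1 := by
  ext r c
  fin_cases r; fin_cases c
  simp [P1, Matrix.mul_apply]

lemma transpose_P2_mul_P2 {i j : Fin p} (hij : i ≠ j) :
    (P2 i j)ᵀ * P2 i j = diagonal fun c => if i = c ∨ j = c then 1 else 0 := by
  ext r c
  by_cases hri : r = i <;> by_cases hrj : r = j <;> by_cases hrc : r = c <;>
    simp_all [P2, Matrix.mul_apply, Fin.sum_univ_two, eq_comm]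

lemma transpose_P1_mul_P1 (i : Fin p) :
    (P1 i)ᵀ * P1 i = diagonal fun c => if i = c then 1 else 0 := by
  ext r c
  by_cases hri : r = i <;> by_cases hrc : r = c <;>
    simp_all [P1, Matrix.mul_apply, eq_comm]

def coverCount (A1 : Finset (Fin p × Fin p)) (A2 : Finset (Fin p)) (c : Fin p) : ℝ :=
  (A1.filter fun ij => ij.1 = c ∨ ij.2 = c).card + if c ∈ A2 then 1 else 0

lemma PO_bounds_coverCount {S : Matrix (Fin p) (Fin p) ℝ} {a b : ℝ} (ha : 0 < a)
    (hS : a • 1 ≤ S ∧ S ≤ b • 1) {A1 : Finset (Fin p × Fin p)} (hA1 : ∀ ij ∈ A1, ij.1 < ij.2)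
    (A2 : Finset (Fin p)) :
    b⁻¹ • diagonal (coverCount A1 A2) ≤ PO S A1 A2 ∧
      PO S A1 A2 ≤ a⁻¹ • diagonal (coverCount A1 A2) := by
  have hgram : diagonal (coverCount A1 A2) =
      ∑ ij ∈ A1, (P2 ij.1 ij.2)ᵀ * P2 ij.1 ij.2 + ∑ i ∈ A2, (P1 i)ᵀ * P1 i := by
    rw [Finset.sum_congr rfl fun ij hij => transpose_P2_mul_P2 (hA1 ij hij).ne,
      Finset.sum_congr rfl fun i _ => transpose_P1_mul_P1 i]
    ext r c
    by_cases hrc : r = c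
    · subst hrc
      simp [coverCount, Matrix.sum_apply, Finset.sum_boole]
    · simp [Matrix.sum_apply, hrc]
  have h2 := fun ij (hij : ij ∈ A1) =>
    transpose_mul_inv_mul_bounds ha hS (P2_mul_transpose (hA1 ij hij).ne)
  have h1 := fun i => transpose_mul_inv_mul_bounds ha hS (P1_mul_transpose (p := p) i)
  rw [hgram, smul_add, smul_add, Finset.smul_sum, Finset.smul_sum, Finset.smul_sum,
    Finset.smul_sum, PO]
  exact ⟨add_le_add (Finset.sum_le_sum fun ij hij => (h2 ij hij).1)
      (Finset.sum_le_sum fun i _ => (h1 i).1),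
    add_le_add (Finset.sum_le_sum fun ij hij => (h2 ij hij).2)
      (Finset.sum_le_sum fun i _ => (h1 i).2)⟩

lemma coverCount_bounds {A1 : Finset (Fin p × Fin p)} {K0 : ℕ} (hK0 : 1 ≤ K0)
    (hK0card : ∀ i : Fin p, (A1.filter fun ij => ij.1 = i ∨ ij.2 = i).card ≤ K0)
    {A2 : Finset (Fin p)} (hA2 : A2 = Finset.univ.filter fun i => ∀ ij ∈ A1, ij.1 ≠ i ∧ ij.2 ≠ i)
    (c : Fin p) : 1 ≤ coverCount A1 A2 c ∧ coverCount A1 A2 c ≤ K0 := by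
  subst hA2
  by_cases hc : ∀ ij ∈ A1, ij.1 ≠ c ∧ ij.2 ≠ c
  · have hempty : (A1.filter fun ij => ij.1 = c ∨ ij.2 = c) = ∅ :=
      Finset.filter_eq_empty_iff.2 fun ij hij => by simpa using hc ij hij
    simp only [coverCount, hempty, Finset.card_empty, Nat.cast_zero, zero_add, Finset.mem_filter,
      Finset.mem_univ, true_and, if_pos hc]
    exact ⟨le_rfl, mod_cast hK0⟩
  · have hpos : 0 < (A1.filter fun ij => ij.1 = c ∨ ij.2 = c).card := by
      push Not at hc
      obtain ⟨ij, hij, hcov⟩ := hc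
      exact Finset.card_pos.2 ⟨ij, Finset.mem_filter.2 ⟨hij, by tauto⟩⟩
    simp only [coverCount, Finset.mem_filter, Finset.mem_univ, true_and, hc, if_false, add_zero]
    exact ⟨mod_cast hpos, mod_cast hK0card c⟩

lemma PO_bounds {S : Matrix (Fin p) (Fin p) ℝ} {a b : ℝ} (ha : 0 < a) (hb : 0 ≤ b)
    (hS : a • 1 ≤ S ∧ S ≤ b • 1) {A1 : Finset (Fin p × Fin p)} (hA1 : ∀ ij ∈ A1, ij.1 < ij.2)
    {K0 : ℕ} (hK0 : 1 ≤ K0)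
    (hK0card : ∀ i : Fin p, (A1.filter fun ij => ij.1 = i ∨ ij.2 = i).card ≤ K0)
    {A2 : Finset (Fin p)} (hA2 : A2 = Finset.univ.filter fun i => ∀ ij ∈ A1, ij.1 ≠ i ∧ ij.2 ≠ i) :
    b⁻¹ • 1 ≤ PO S A1 A2 ∧ PO S A1 A2 ≤ (K0 * a⁻¹) • 1 := by
  obtain ⟨hlo, hhi⟩ := PO_bounds_coverCount ha hS hA1 A2
  have hcover := coverCount_bounds hK0 hK0card hA2
  constructor
  · calc b⁻¹ • (1 : Matrix (Fin p) (Fin p) ℝ) = b⁻¹ • diagonal fun _ => 1 := by rw [diagonal_one]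
      _ ≤ _ := smul_le_smul_of_nonneg_left (diagonal_mono fun c => (hcover c).1) (inv_nonneg.2 hb)
      _ ≤ _ := hlo
  · calc _ ≤ _ := hhi
      _ ≤ a⁻¹ • diagonal fun _ => (K0 : ℝ) :=
        smul_le_smul_of_nonneg_left (diagonal_mono fun c => (hcover c).2) (inv_nonneg.2 ha.le)
      _ = (K0 * a⁻¹) • (1 : Matrix (Fin p) (Fin p) ℝ) := by
        rw [← smul_one_eq_diagonal, smul_smul, mul_comm]

lemma psdSqrt_transpose {S : Matrix (Fin p) (Fin p) ℝ} (hS : S.PosSemidef) :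
    (psdSqrt hS)ᵀ = psdSqrt hS := by
  rw [← conjTranspose_eq_transpose_of_trivial, psdSqrt, star_eq_conjTranspose]
  exact isHermitian_mul_mul_conjTranspose _ (isHermitian_diagonal _)

lemma psdSqrt_mul_self {S : Matrix (Fin p) (Fin p) ℝ} (hS : S.PosSemidef) :
    psdSqrt hS * psdSqrt hS = S := by
  conv_rhs => rw [hS.1.spectral_theorem, Unitary.conjStarAlgAut_apply]
  simp only [psdSqrt, Matrix.mul_assoc]
  rw [← Matrix.mul_assoc (star _) _ (diagonal _ * _), Unitary.coe_star_mul_self, Matrix.one_mul,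
    ← Matrix.mul_assoc (diagonal _) (diagonal _), diagonal_mul_diagonal]
  congr 3
  funext i
  simp [Real.mul_self_sqrt (hS.eigenvalues_nonneg i)]

lemma psdSqrt_mul_PO_mul_psdSqrt_bounds {S : Matrix (Fin p) (Fin p) ℝ} (hS : S.PosSemidef)
    {a b : ℝ} (ha : 0 < a) (hb : 0 ≤ b) (hSab : a • 1 ≤ S ∧ S ≤ b • 1)
    {A1 : Finset (Fin p × Fin p)} (hA1 : ∀ ij ∈ A1, ij.1 < ij.2) {K0 : ℕ} (hK0 : 1 ≤ K0)
    (hK0card : ∀ i : Fin p, (A1.filter fun ij => ij.1 = i ∨ ij.2 = i).card ≤ K0)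
    {A2 : Finset (Fin p)} (hA2 : A2 = Finset.univ.filter fun i => ∀ ij ∈ A1, ij.1 ≠ i ∧ ij.2 ≠ i) :
    (b⁻¹ * a) • 1 ≤ psdSqrt hS * PO S A1 A2 * psdSqrt hS ∧
      psdSqrt hS * PO S A1 A2 * psdSqrt hS ≤ (K0 * a⁻¹ * b) • 1 := by
  have hPO := PO_bounds ha hb hSab hA1 hK0 hK0card hA2
  have hQ : psdSqrt hS * (psdSqrt hS)ᵀ = S := by rw [psdSqrt_transpose, psdSqrt_mul_self]
  have hconj : psdSqrt hS * PO S A1 A2 * psdSqrt hS =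
      psdSqrt hS * PO S A1 A2 * (psdSqrt hS)ᵀ := by
    rw [psdSqrt_transpose]
  rw [hconj]
  exact ⟨smul_one_le_mul_mul_transpose (inv_nonneg.2 hb) hPO.1 (hQ.symm ▸ hSab.1),
    mul_mul_transpose_le_smul_one (by positivity) hPO.2 (hQ.symm ▸ hSab.2)⟩

end PHT

/-- For `Σ` symmetric positive definite with all eigenvalues in `[1/K̄, K̄]`,
pairs `A₁` each index of which appears in at most `K₀` pairs, `A₂` the unpaired indices,
`P_O` as above and `Λ₁ = Σ^{1/2} P_O Σ^{1/2}`: every eigenvalue of `Λ₁` (equivalently,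
every Rayleigh quotient at a unit vector) lies in `[K̄⁻², K₀K̄²]`; consequently
`p K̄⁻⁴ ≤ tr(Λ₁²) ≤ p K₀² K̄⁴` and `tr(Λ₁⁴)/tr²(Λ₁²) ≤ K₀⁴ K̄¹⁶ / p`. -/
theorem statement10 {p : ℕ} (hp : 0 < p) (Kb : ℝ) (hKb : 1 ≤ Kb)
    (S : Matrix (Fin p) (Fin p) ℝ) (hPD : S.PosDef)
    (heig : ∀ i, 1 / Kb ≤ hPD.1.eigenvalues i ∧ hPD.1.eigenvalues i ≤ Kb)
    (A1 : Finset (Fin p × Fin p)) (hA1 : ∀ ij ∈ A1, ij.1 < ij.2)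
    (K0 : ℕ) (hK0 : 1 ≤ K0)
    (hK0card : ∀ i : Fin p, (A1.filter fun ij => ij.1 = i ∨ ij.2 = i).card ≤ K0)
    (A2 : Finset (Fin p))
    (hA2 : A2 = Finset.univ.filter fun i => ∀ ij ∈ A1, ij.1 ≠ i ∧ ij.2 ≠ i)
    (Λ : Matrix (Fin p) (Fin p) ℝ)
    (hΛ : Λ = PHT.psdSqrt hPD.posSemidef * PHT.PO S A1 A2 * PHT.psdSqrt hPD.posSemidef) :
    (∀ v : Fin p → ℝ, (∑ i, v i ^ 2) = 1 →
        Kb⁻¹ ^ 2 ≤ v ⬝ᵥ Λ.mulVec v ∧ v ⬝ᵥ Λ.mulVec v ≤ (K0 : ℝ) * Kb ^ 2) ∧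
      (∀ hΛh : Λ.IsHermitian, ∀ i,
        Kb⁻¹ ^ 2 ≤ hΛh.eigenvalues i ∧ hΛh.eigenvalues i ≤ (K0 : ℝ) * Kb ^ 2) ∧
      (p : ℝ) * Kb⁻¹ ^ 4 ≤ Matrix.trace (Λ ^ 2) ∧
      Matrix.trace (Λ ^ 2) ≤ (p : ℝ) * (K0 : ℝ) ^ 2 * Kb ^ 4 ∧
      Matrix.trace (Λ ^ 4) / Matrix.trace (Λ ^ 2) ^ 2 ≤ (K0 : ℝ) ^ 4 * Kb ^ 16 / (p : ℝ) := by
  have hKb₀ : 0 < Kb := one_pos.trans_le hKb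
  have hS : Kb⁻¹ • 1 ≤ S ∧ S ≤ Kb • 1 :=
    ⟨(hPD.1.smul_one_le_iff _).2 fun i => by simpa using (heig i).1,
      (hPD.1.le_smul_one_iff _).2 fun i => (heig i).2⟩
  obtain ⟨hlo, hhi⟩ := PHT.psdSqrt_mul_PO_mul_psdSqrt_bounds hPD.posSemidef (inv_pos.2 hKb₀)
    hKb₀.le hS hA1 hK0 hK0card hA2
  rw [← hΛ, ← sq] at hlo
  rw [← hΛ, inv_inv, mul_assoc, ← sq] at hhi
  have heigΛ : ∀ (hΛh : Λ.IsHermitian) i,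
      Kb⁻¹ ^ 2 ≤ hΛh.eigenvalues i ∧ hΛh.eigenvalues i ≤ (K0 : ℝ) * Kb ^ 2 :=
    fun hΛh i => ⟨(hΛh.smul_one_le_iff _).1 hlo i, (hΛh.le_smul_one_iff _).1 hhi i⟩
  have hΛh := isHermitian_of_smul_one_le hlo
  obtain ⟨htr2lo, htr2hi⟩ := hΛh.trace_pow_bounds (by positivity) (heigΛ hΛh) 2
  simp only [Fintype.card_fin] at htr2lo htr2hi
  refine ⟨fun v hv => ?_, heigΛ, by simpa [← pow_mul] using htr2lo,
    by simpa [mul_pow, ← pow_mul, mul_assoc] using htr2hi, ?_⟩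
  · have hvv : v ⬝ᵥ v = 1 := by simpa [dotProduct, sq] using hv
    simpa [smul_mulVec, dotProduct_smul, hvv] using
      And.intro (dotProduct_mulVec_mono hlo v) (dotProduct_mulVec_mono hhi v)
  · calc Matrix.trace (Λ ^ 4) / Matrix.trace (Λ ^ 2) ^ 2
        ≤ ((K0 : ℝ) * Kb ^ 2) ^ 4 / (p * (Kb⁻¹ ^ 2) ^ 4) := by
          simpa using
            hΛh.trace_pow_four_div_sq_le (by positivity) (heigΛ hΛh) (by simpa using hp)
      _ = (K0 : ℝ) ^ 4 * Kb ^ 16 / (p : ℝ) := by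
          field_simp
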